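/- Let V = {(x_1,y_1),…,(x_8,y_8)} ⊂ ℝ² be eight distinct points whose compressed Vandermonde matrix W on the basis {1, x, y, x², xy, y², x²y, xy²} is invertible, and let q_1, q_2 be cubic polynomials vanishing on V with leading monomials x³ and y³ (with respect to graded lex order). Suppose s(x,y) = x²y² − (a_0 + a_1 x + a_2 y + a_3 x² + a_4 xy + a_5 y² + a_6 x²y + a_7 xy²) with (a_0,…,a_7)ᵀ = W⁻¹(x_1²y_1², …, x_8²y_8²)ᵀ. Then s vanishes on V, and every polynomial p of degree ≤ 6 vanishing identically on V can be written as p = A q_1 + B q_2 + C s with deg A, deg B ≤ 3 and deg C ≤ 2. -/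
import Mathlib


open MvPolynomial

/-- The exponent Finsupp of the monomial `x^i y^j`. -/
noncomputable def mIdx (i j : ℕ) : Fin 2 →₀ ℕ := Finsupp.single 0 i + Finsupp.single 1 j

/-- The monomial `x^i y^j` as a bivariate real polynomial. -/
noncomputable def mono (i j : ℕ) : MvPolynomial (Fin 2) ℝ := monomial (mIdx i j) 1

/-- Evaluation of a bivariate polynomial at a point of `ℝ²`. -/
noncomputable def evalAt (z : ℝ × ℝ) (p : MvPolynomial (Fin 2) ℝ) : ℝ := eval ![z.1, z.2] p

/-- Graded lexicographic order (with `x > y`) on exponent pairs. -/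
def glexLt (a b : ℕ × ℕ) : Prop :=
  a.1 + a.2 < b.1 + b.2 ∨ (a.1 + a.2 = b.1 + b.2 ∧ a.1 < b.1)

/-- `q` has leading monomial `x^i y^j` (with coefficient 1) in graded lex order `x > y`. -/
def HasLeading (q : MvPolynomial (Fin 2) ℝ) (i j : ℕ) : Prop :=
  q.coeff (mIdx i j) = 1 ∧ ∀ d ∈ q.support, d ≠ mIdx i j → glexLt (d 0, d 1) (i, j)

/-- The basis of monomials `{1, x, y, x², xy, y², x²y, xy²}`. -/
def bas8b : Fin 8 → ℕ × ℕ := ![(0,0),(1,0),(0,1),(2,0),(1,1),(0,2),(2,1),(1,2)]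

/-- The compressed Vandermonde matrix of eight points on the basis `bas8b`. -/
def W8b (pts : Fin 8 → ℝ × ℝ) : Matrix (Fin 8) (Fin 8) ℝ :=
  Matrix.of fun k m => (pts k).1 ^ (bas8b m).1 * (pts k).2 ^ (bas8b m).2

-- basic lemmas
@[simp] lemma mIdx_apply0 (i j : ℕ) : mIdx i j 0 = i := by simp [mIdx]
@[simp] lemma mIdx_apply1 (i j : ℕ) : mIdx i j 1 = j := by
  simp [mIdx, Finsupp.single_apply]

lemma eq_mIdx (d : Fin 2 →₀ ℕ) : d = mIdx (d 0) (d 1) := by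
  ext x
  fin_cases x <;> simp

lemma mIdx_add (i j k l : ℕ) : mIdx i j + mIdx k l = mIdx (i+k) (j+l) := by
  ext x; fin_cases x <;> simp

lemma mIdx_inj {i j k l : ℕ} (h : mIdx i j = mIdx k l) : i = k ∧ j = l := by
  constructor
  · have := congrArg (fun f => f 0) h; simpa using this
  · have := congrArg (fun f => f 1) h; simpa using this

lemma mono_eq (i j : ℕ) : mono i j = X 0 ^ i * X 1 ^ j := by
  rw [mono, mIdx, X_pow_eq_monomial, X_pow_eq_monomial, monomial_mul, one_mul]

@[simp] lemma evalAt_mono (z : ℝ × ℝ) (i j : ℕ) :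
    evalAt z (mono i j) = z.1 ^ i * z.2 ^ j := by
  rw [evalAt, mono_eq]; simp

lemma totalDegree_mono_le (i j : ℕ) : (mono i j).totalDegree ≤ i + j := by
  rw [mono_eq]
  calc (X (0:Fin 2) ^ i * X 1 ^ j : MvPolynomial (Fin 2) ℝ).totalDegree
      ≤ (X (0:Fin 2) ^ i : MvPolynomial (Fin 2) ℝ).totalDegree
        + (X (1:Fin 2) ^ j : MvPolynomial (Fin 2) ℝ).totalDegree := totalDegree_mul _ _
    _ ≤ i + j := by
        gcongr <;> simp [totalDegree_X_pow]

lemma finsuppSum (d : Fin 2 →₀ ℕ) : (d.sum fun _ e => e) = d 0 + d 1 := by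
  rw [Finsupp.sum_fintype]
  · exact Fin.sum_univ_two _
  · intro; rfl

lemma deg_mem {p : MvPolynomial (Fin 2) ℝ} {d : Fin 2 →₀ ℕ} (h : d ∈ p.support) :
    d 0 + d 1 ≤ p.totalDegree := by
  have := le_totalDegree h
  rwa [finsuppSum] at this

def gN (a : ℕ × ℕ) : ℕ := 7*(a.1+a.2) + a.1

lemma gN_lt {a b : ℕ × ℕ} (h : glexLt a b) (hb : b.1 + b.2 ≤ 6) (ha1 : a.1 ≤ a.1 + a.2) :
    gN a < gN b := by
  rcases h with h | ⟨h1, h2⟩ <;> simp [gN] <;> omega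

noncomputable def basSet : Finset (Fin 2 →₀ ℕ) :=
  Finset.univ.image fun m : Fin 8 => mIdx (bas8b m).1 (bas8b m).2

open scoped Classical in
noncomputable def mes (p : MvPolynomial (Fin 2) ℝ) : ℕ :=
  (p.support.filter (fun d => d ∉ basSet)).sup (fun d => gN (d 0, d 1))

lemma mem_basSet (m : Fin 8) : mIdx (bas8b m).1 (bas8b m).2 ∈ basSet :=
  Finset.mem_image.2 ⟨m, Finset.mem_univ _, rfl⟩

lemma classify {d : Fin 2 →₀ ℕ} (hb : d ∉ basSet) :
    3 ≤ d 0 ∨ 3 ≤ d 1 ∨ (d 0 = 2 ∧ d 1 = 2) := by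
  by_contra h
  push_neg at h
  obtain ⟨h0, h1, h2⟩ := h
  apply hb
  rw [eq_mIdx d]
  interval_cases h : d 0 <;> interval_cases h' : d 1
  · simpa only [show bas8b 0 = (0,0) from rfl] using mem_basSet 0
  · simpa only [show bas8b 2 = (0,1) from rfl] using mem_basSet 2
  · simpa only [show bas8b 5 = (0,2) from rfl] using mem_basSet 5
  · simpa only [show bas8b 1 = (1,0) from rfl] using mem_basSet 1
  · simpa only [show bas8b 4 = (1,1) from rfl] using mem_basSet 4
  · simpa only [show bas8b 7 = (1,2) from rfl] using mem_basSet 7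
  · simpa only [show bas8b 3 = (2,0) from rfl] using mem_basSet 3
  · simpa only [show bas8b 6 = (2,1) from rfl] using mem_basSet 6
  · exact absurd rfl (h2 rfl)

open scoped Classical in
lemma step (q : MvPolynomial (Fin 2) ℝ) (li lj : ℕ) (hq : HasLeading q li lj)
    (hdq : q.totalDegree ≤ li + lj)
    (p : MvPolynomial (Fin 2) ℝ) (hp : p.totalDegree ≤ 6)
    (d : Fin 2 →₀ ℕ) (hd : d ∈ p.support) (hdb : d ∉ basSet)
    (hmax : ∀ f ∈ p.support, f ∉ basSet → gN (f 0, f 1) ≤ gN (d 0, d 1))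
    (hli : li ≤ d 0) (hlj : lj ≤ d 1) :
    ∃ (c : ℝ) (e : Fin 2 →₀ ℕ),
      e 0 + e 1 + li + lj ≤ 6 ∧
      (p - monomial e c * q).totalDegree ≤ 6 ∧
      mes (p - monomial e c * q) < mes p := by
  set c := p.coeff d with hc
  set e : Fin 2 →₀ ℕ := mIdx (d 0 - li) (d 1 - lj) with he
  have hd6 : d 0 + d 1 ≤ 6 := (deg_mem hd).trans hp
  have he0 : e 0 = d 0 - li := by simp [he]
  have he1 : e 1 = d 1 - lj := by simp [he]
  have hed : e + mIdx li lj = d := by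
    rw [he, mIdx_add, show d 0 - li + li = d 0 from by omega,
      show d 1 - lj + lj = d 1 from by omega]
    exact (eq_mIdx d).symm
  set p' := p - monomial e c * q with hp'
  have hdeg : p'.totalDegree ≤ 6 := by
    refine (totalDegree_sub p _).trans (max_le hp ?_)
    refine (totalDegree_mul _ _).trans ?_
    have h1 : (monomial e c).totalDegree ≤ e 0 + e 1 :=
      (totalDegree_monomial_le e c).trans_eq (finsuppSum e)
    omega
  have hcd : p'.coeff d = 0 := by
    rw [hp', coeff_sub, ← hed, coeff_monomial_mul, hq.1, mul_one, hed, ← hc, sub_self]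
  have key : ∀ f ∈ p'.support, f ∉ basSet → gN (f 0, f 1) < gN (d 0, d 1) := by
    intro f hf hfb
    have hf6 : f 0 + f 1 ≤ 6 := (deg_mem hf).trans hdeg
    have hfd : f ≠ d := by
      intro hfd; rw [hfd] at hf
      exact (mem_support_iff.1 hf) hcd
    have hsub := support_sub (Fin 2) p (monomial e c * q) hf
    rcases Finset.mem_union.1 hsub with hfp | hfq
    · have hle := hmax f hfp hfb
      rcases lt_or_eq_of_le hle with h | h
      · exact h
      · exfalso
        apply hfd
        have h0 : f 0 = d 0 ∧ f 1 = d 1 := by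
          simp only [gN] at h; constructor <;> omega
        rw [eq_mIdx f, eq_mIdx d, h0.1, h0.2]
    · have := support_mul _ _ hfq
      rw [Finset.mem_add] at this
      obtain ⟨u, hu, v, hv, huv⟩ := this
      have hu' : u = e := by
        by_cases hc0 : c = 0
        · exfalso; rw [support_monomial, if_pos hc0] at hu; exact absurd hu (by simp)
        · rw [support_monomial, if_neg hc0] at hu; exact Finset.mem_singleton.1 hu
      subst hu'
      by_cases hv' : v = mIdx li lj
      · exfalso; apply hfd; rw [← huv, hv', hed]
      · have hg := hq.2 v hv hv'
        have hglex : glexLt (f 0, f 1) (d 0, d 1) := by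
          have hf0 : f 0 = e 0 + v 0 := by rw [← huv]; simp
          have hf1 : f 1 = e 1 + v 1 := by rw [← huv]; simp
          rcases hg with hg | ⟨hg1, hg2⟩
          · left; simp only at hg ⊢; omega
          · right; simp only at hg1 hg2 ⊢; omega
        exact gN_lt hglex hd6 (by omega)
  have hdpos : 0 < gN (d 0, d 1) := by
    rcases Nat.eq_zero_or_pos (gN (d 0, d 1)) with h | h
    swap
    · exact h
    · exfalso
      have h0 : d 0 = 0 ∧ d 1 = 0 := by simp only [gN] at h; omega
      apply hdb
      rw [eq_mIdx d, h0.1, h0.2]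
      simpa only [show bas8b 0 = (0,0) from rfl] using mem_basSet 0
  have hdle : gN (d 0, d 1) ≤ mes p := by
    unfold mes
    refine Finset.le_sup (f := fun d : Fin 2 →₀ ℕ => gN (d 0, d 1)) ?_
    rw [Finset.mem_filter]
    exact ⟨hd, hdb⟩
  refine ⟨c, e, by omega, hdeg, ?_⟩
  show (p'.support.filter (fun d => d ∉ basSet)).sup (fun d => gN (d 0, d 1)) < mes p
  rw [Finset.sup_lt_iff (lt_of_lt_of_le hdpos hdle : (⊥ : ℕ) < mes p)]
  intro f hf
  rw [Finset.mem_filter] at hf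
  exact lt_of_lt_of_le (key f hf.1 hf.2) hdle

open scoped Classical in
lemma decomp (q1 q2 s : MvPolynomial (Fin 2) ℝ)
    (hd1 : q1.totalDegree ≤ 3) (hl1 : HasLeading q1 3 0)
    (hd2 : q2.totalDegree ≤ 3) (hl2 : HasLeading q2 0 3)
    (hds : s.totalDegree ≤ 4) (hls : HasLeading s 2 2) :
    ∀ n : ℕ, ∀ p : MvPolynomial (Fin 2) ℝ, mes p < n → p.totalDegree ≤ 6 →
    ∃ A B G r : MvPolynomial (Fin 2) ℝ,
      A.totalDegree ≤ 3 ∧ B.totalDegree ≤ 3 ∧ G.totalDegree ≤ 2 ∧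
      (∀ f ∈ r.support, f ∈ basSet) ∧ p = A * q1 + B * q2 + G * s + r := by
  intro n
  induction n with
  | zero => intro p h _; exact absurd h (Nat.not_lt_zero _)
  | succ n ih =>
    intro p hmes hp
    by_cases hemp : (p.support.filter (fun d => d ∉ basSet)) = ∅
    · refine ⟨0, 0, 0, p, by simp, by simp, by simp, ?_, by simp⟩
      intro f hf
      by_contra hfb
      have : f ∈ p.support.filter (fun d => d ∉ basSet) := Finset.mem_filter.2 ⟨hf, hfb⟩
      rw [hemp] at this
      exact absurd this (Finset.notMem_empty f)
    · obtain ⟨d, hdmem, hdsup⟩ := Finset.exists_mem_eq_sup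
        (p.support.filter (fun d => d ∉ basSet)) (Finset.nonempty_iff_ne_empty.2 hemp)
        (fun d : Fin 2 →₀ ℕ => gN (d 0, d 1))
      rw [Finset.mem_filter] at hdmem
      have hmax : ∀ f ∈ p.support, f ∉ basSet → gN (f 0, f 1) ≤ gN (d 0, d 1) := by
        intro f hf hfb
        rw [← hdsup]
        exact Finset.le_sup (f := fun d : Fin 2 →₀ ℕ => gN (d 0, d 1))
          (Finset.mem_filter.2 ⟨hf, hfb⟩)
      have hmes' : mes p ≤ n := by omega
      have hd6 : d 0 + d 1 ≤ 6 := (deg_mem hdmem.1).trans hp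
      rcases classify hdmem.2 with hcase | hcase | hcase
      · obtain ⟨c, e, hed, hdeg', hlt⟩ :=
          step q1 3 0 hl1 (by omega) p hp d hdmem.1 hdmem.2 hmax hcase (by omega)
        obtain ⟨A, B, G, r, hA, hB, hG, hr, heq⟩ :=
          ih (p - monomial e c * q1) (by omega) hdeg'
        refine ⟨A + monomial e c, B, G, r, ?_, hB, hG, hr, by linear_combination heq⟩
        refine (totalDegree_add _ _).trans (max_le hA ?_)
        exact ((totalDegree_monomial_le e c).trans_eq (finsuppSum e)).trans (by omega)
      · obtain ⟨c, e, hed, hdeg', hlt⟩ :=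
          step q2 0 3 hl2 (by omega) p hp d hdmem.1 hdmem.2 hmax (by omega) hcase
        obtain ⟨A, B, G, r, hA, hB, hG, hr, heq⟩ :=
          ih (p - monomial e c * q2) (by omega) hdeg'
        refine ⟨A, B + monomial e c, G, r, hA, ?_, hG, hr, by linear_combination heq⟩
        refine (totalDegree_add _ _).trans (max_le hB ?_)
        exact ((totalDegree_monomial_le e c).trans_eq (finsuppSum e)).trans (by omega)
      · obtain ⟨c, e, hed, hdeg', hlt⟩ :=
          step s 2 2 hls (by omega) p hp d hdmem.1 hdmem.2 hmax (by omega) (by omega)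
        obtain ⟨A, B, G, r, hA, hB, hG, hr, heq⟩ :=
          ih (p - monomial e c * s) (by omega) hdeg'
        refine ⟨A, B, G + monomial e c, r, hA, hB, ?_, hr, by linear_combination heq⟩
        refine (totalDegree_add _ _).trans (max_le hG ?_)
        exact ((totalDegree_monomial_le e c).trans_eq (finsuppSum e)).trans (by omega)

lemma bas_ne_22 (m : Fin 8) : bas8b m ≠ (2,2) := by revert m; decide
lemma bas_deg_le (m : Fin 8) : (bas8b m).1 + (bas8b m).2 ≤ 3 := by revert m; decide
lemma bas_inj : Function.Injective bas8b := by decide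

lemma s_support (a : Fin 8 → ℝ) :
    (mono 2 2 - ∑ m : Fin 8, C (a m) * mono (bas8b m).1 (bas8b m).2).support
      ⊆ insert (mIdx 2 2) basSet := by
  intro f hf
  by_contra hfn
  simp only [Finset.mem_insert, not_or] at hfn
  apply mem_support_iff.1 hf
  rw [coeff_sub]
  have h1 : coeff f (mono 2 2) = 0 := by
    rw [mono, coeff_monomial, if_neg (fun h => hfn.1 h.symm)]
  have h2 : coeff f (∑ m : Fin 8, C (a m) * mono (bas8b m).1 (bas8b m).2) = 0 := by
    rw [coeff_sum]
    refine Finset.sum_eq_zero fun m _ => ?_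
    rw [mono, C_mul_monomial, coeff_monomial, if_neg]
    intro h
    exact hfn.2 (h ▸ mem_basSet m)
  rw [h1, h2, sub_zero]

lemma s_coeff (a : Fin 8 → ℝ) :
    coeff (mIdx 2 2) (mono 2 2 - ∑ m : Fin 8, C (a m) * mono (bas8b m).1 (bas8b m).2) = 1 := by
  rw [coeff_sub, mono, coeff_monomial, if_pos rfl, coeff_sum]
  have : ∀ m : Fin 8, coeff (mIdx 2 2) (C (a m) * mono (bas8b m).1 (bas8b m).2) = 0 := by
    intro m
    rw [mono, C_mul_monomial, coeff_monomial, if_neg]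
    intro h
    have := mIdx_inj h
    exact bas_ne_22 m (Prod.ext this.1 this.2)
  rw [Finset.sum_congr rfl (fun m _ => this m), Finset.sum_const_zero, sub_zero]

lemma s_leading (a : Fin 8 → ℝ) :
    HasLeading (mono 2 2 - ∑ m : Fin 8, C (a m) * mono (bas8b m).1 (bas8b m).2) 2 2 := by
  refine ⟨s_coeff a, ?_⟩
  intro d hd hne
  rcases Finset.mem_insert.1 (s_support a hd) with h | h
  · exact absurd h hne
  · obtain ⟨m, _, hm⟩ := Finset.mem_image.1 h
    left
    have h0 : d 0 = (bas8b m).1 := by rw [← hm]; simp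
    have h1 : d 1 = (bas8b m).2 := by rw [← hm]; simp
    have := bas_deg_le m
    simp only [h0, h1]
    omega

lemma s_totalDegree (a : Fin 8 → ℝ) :
    (mono 2 2 - ∑ m : Fin 8, C (a m) * mono (bas8b m).1 (bas8b m).2).totalDegree ≤ 4 := by
  rw [totalDegree]
  refine Finset.sup_le fun d hd => ?_
  rw [finsuppSum]
  rcases Finset.mem_insert.1 (s_support a hd) with h | h
  · rw [h]; simp
  · obtain ⟨m, _, hm⟩ := Finset.mem_image.1 h
    have h0 : d 0 = (bas8b m).1 := by rw [← hm]; simp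
    have h1 : d 1 = (bas8b m).2 := by rw [← hm]; simp
    have := bas_deg_le m
    omega

lemma eval_basis (r : MvPolynomial (Fin 2) ℝ) (hr : ∀ f ∈ r.support, f ∈ basSet) (z : ℝ × ℝ) :
    evalAt z r = ∑ m : Fin 8,
      r.coeff (mIdx (bas8b m).1 (bas8b m).2) * ((z.1 ^ (bas8b m).1) * (z.2 ^ (bas8b m).2)) := by
  rw [evalAt, eval_eq']
  have step1 : ∑ d ∈ r.support, r.coeff d * ∏ i, (![z.1, z.2]) i ^ d i
      = ∑ d ∈ basSet, r.coeff d * ∏ i, (![z.1, z.2]) i ^ d i := by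
    refine Finset.sum_subset hr fun d _ hd => ?_
    rw [notMem_support_iff.1 hd, zero_mul]
  rw [step1, basSet, Finset.sum_image (fun m _ m' _ h => bas_inj
    (Prod.ext (mIdx_inj h).1 (mIdx_inj h).2))]
  refine Finset.sum_congr rfl fun m _ => ?_
  rw [Fin.prod_univ_two]
  simp

lemma r_zero (pts : Fin 8 → ℝ × ℝ) (hW : IsUnit (W8b pts).det)
    (r : MvPolynomial (Fin 2) ℝ) (hr : ∀ f ∈ r.support, f ∈ basSet)
    (hv : ∀ k, evalAt (pts k) r = 0) : r = 0 := by
  set cvec : Fin 8 → ℝ := fun m => r.coeff (mIdx (bas8b m).1 (bas8b m).2) with hcvec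
  have hmul : (W8b pts).mulVec cvec = 0 := by
    funext k
    have := eval_basis r hr (pts k)
    rw [hv k] at this
    simp only [Matrix.mulVec, dotProduct, W8b, Matrix.of_apply, Pi.zero_apply]
    have hcomm : ∑ m : Fin 8, (pts k).1 ^ (bas8b m).1 * (pts k).2 ^ (bas8b m).2 * cvec m
        = ∑ m : Fin 8, cvec m * ((pts k).1 ^ (bas8b m).1 * (pts k).2 ^ (bas8b m).2) :=
      Finset.sum_congr rfl fun m _ => mul_comm _ _
    rw [hcomm]
    exact this.symm
  have hc0 : cvec = 0 := by
    have h := congrArg ((W8b pts)⁻¹.mulVec) hmul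
    rwa [Matrix.mulVec_mulVec, Matrix.nonsing_inv_mul _ hW, Matrix.one_mulVec,
      Matrix.mulVec_zero] at h
  ext f
  rw [coeff_zero]
  by_cases hf : f ∈ r.support
  · obtain ⟨m, _, hm⟩ := Finset.mem_image.1 (hr f hf)
    rw [← hm]
    exact congrFun hc0 m
  · exact notMem_support_iff.1 hf

lemma evalAt_sub (z : ℝ × ℝ) (p q : MvPolynomial (Fin 2) ℝ) :
    evalAt z (p - q) = evalAt z p - evalAt z q := by simp [evalAt]

lemma evalAt_C_mul (z : ℝ × ℝ) (c : ℝ) (p : MvPolynomial (Fin 2) ℝ) :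
    evalAt z (C c * p) = c * evalAt z p := by simp [evalAt]


/-- `s = x²y² − Σ aₘ·(monomial m)` with `a = W⁻¹(xₖ²yₖ²)` vanishes on the
eight points, and every polynomial of degree ≤ 6 vanishing on them can be written as
`A q₁ + B q₂ + C s` with `deg A, deg B ≤ 3`, `deg C ≤ 2`. -/
theorem representation_rank8_case4 (pts : Fin 8 → ℝ × ℝ) (hdist : Function.Injective pts)
    (hW : IsUnit (W8b pts).det)
    (q1 q2 : MvPolynomial (Fin 2) ℝ)
    (hd1 : q1.totalDegree ≤ 3) (hl1 : HasLeading q1 3 0) (hv1 : ∀ k, evalAt (pts k) q1 = 0)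
    (hd2 : q2.totalDegree ≤ 3) (hl2 : HasLeading q2 0 3) (hv2 : ∀ k, evalAt (pts k) q2 = 0)
    (a : Fin 8 → ℝ)
    (ha : a = (W8b pts)⁻¹.mulVec (fun k => (pts k).1 ^ 2 * (pts k).2 ^ 2))
    (s : MvPolynomial (Fin 2) ℝ)
    (hs : s = mono 2 2 - ∑ m : Fin 8, C (a m) * mono (bas8b m).1 (bas8b m).2) :
    (∀ k, evalAt (pts k) s = 0) ∧
    ∀ p : MvPolynomial (Fin 2) ℝ, p.totalDegree ≤ 6 → (∀ k, evalAt (pts k) p = 0) →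
      ∃ A B G : MvPolynomial (Fin 2) ℝ,
        A.totalDegree ≤ 3 ∧ B.totalDegree ≤ 3 ∧ G.totalDegree ≤ 2 ∧
        p = A * q1 + B * q2 + G * s := by
  have hWa : (W8b pts).mulVec a = fun k => (pts k).1 ^ 2 * (pts k).2 ^ 2 := by
    rw [ha, Matrix.mulVec_mulVec, Matrix.mul_nonsing_inv _ hW, Matrix.one_mulVec]
  have hvs : ∀ k, evalAt (pts k) s = 0 := by
    intro k
    rw [hs, evalAt_sub, evalAt_mono]
    have hsum : evalAt (pts k) (∑ m : Fin 8, C (a m) * mono (bas8b m).1 (bas8b m).2)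
        = ∑ m : Fin 8, a m * ((pts k).1 ^ (bas8b m).1 * (pts k).2 ^ (bas8b m).2) := by
      rw [evalAt, map_sum]
      refine Finset.sum_congr rfl fun m _ => ?_
      rw [← evalAt, evalAt_C_mul, evalAt_mono]
    rw [hsum]
    have : ∑ m : Fin 8, a m * ((pts k).1 ^ (bas8b m).1 * (pts k).2 ^ (bas8b m).2)
        = (W8b pts).mulVec a k := by
      simp only [Matrix.mulVec, dotProduct, W8b, Matrix.of_apply]
      exact Finset.sum_congr rfl fun m _ => mul_comm _ _
    rw [this, hWa]
    simp
  refine ⟨hvs, ?_⟩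
  intro p hp hpv
  have hds : s.totalDegree ≤ 4 := hs ▸ s_totalDegree a
  have hls : HasLeading s 2 2 := hs ▸ s_leading a
  obtain ⟨A, B, G, r, hA, hB, hG, hr, heq⟩ :=
    decomp q1 q2 s hd1 hl1 hd2 hl2 hds hls (mes p + 1) p (Nat.lt_succ_self _) hp
  have hrv : ∀ k, evalAt (pts k) r = 0 := by
    intro k
    have h := congrArg (evalAt (pts k)) heq
    simp only [evalAt, map_add, map_mul] at h
    have e1 := hv1 k; have e2 := hv2 k; have es := hvs k; have ep := hpv k
    simp only [evalAt] at e1 e2 es ep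
    rw [e1, e2, es, ep] at h
    simp only [mul_zero, zero_add] at h
    rw [evalAt]
    exact h.symm
  have hr0 : r = 0 := r_zero pts hW r hr hrv
  exact ⟨A, B, G, hA, hB, hG, by rw [heq, hr0, add_zero]⟩
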